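/- arXiv:2412.00347 — 2 statements merged into one kernel-verified Lean document; each statement's English description precedes it below -/
import Mathlib

section
/- Let X be a Banach space, λ > 0, α ∈ (0,1), and let k(r) = (1 + r^{-α}) e^{-λ r} for r > 0. If f ∈ C_b(ℝ, X) is almost periodic, then the function u(t) = ∫_{-∞}^t k(t-s) f(s) ds is almost periodic, and every ε-almost period T of f satisfies sup_t ‖u(t+T) - u(t)‖ ≤ ε · (1/λ + λ^{α-1} Γ(1-α)). -/
open MeasureTheory Real Set Filter

/-- Bohr almost periodicity. -/
def IsAlmostPeriodic {X : Type*} [NormedAddCommGroup X] (f : ℝ → X) : Prop :=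
  ∀ ε > (0:ℝ), ∃ l > (0:ℝ), ∀ a : ℝ, ∃ T ∈ Set.Icc a (a + l), ∀ t : ℝ, ‖f (t + T) - f t‖ < ε

section Aux
variable {X : Type*} [NormedAddCommGroup X] [NormedSpace ℝ X]

lemma aux_shift (g : ℝ → X) (t T : ℝ) :
    ∫ s in Iic (t + T), g s = ∫ s in Iic t, g (s + T) := by
  have h := (measurePreserving_add_right (volume : Measure ℝ) T).setIntegral_preimage_emb
      (measurableEmbedding_addRight T) g (Iic (t + T))
  rw [show (fun x : ℝ => x + T) ⁻¹' Iic (t + T) = Iic t by ext x; simp] at h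
  exact h.symm

lemma aux_reflect (g : ℝ → X) (t : ℝ) :
    ∫ s in Iic t, g (t - s) = ∫ r in Ioi 0, g r := by
  have h₂ : MeasurableEmbedding (fun x : ℝ => t - x) :=
    (MeasurableEquiv.subLeft t).measurableEmbedding
  have h := (Measure.measurePreserving_sub_left (volume : Measure ℝ) t).setIntegral_preimage_emb
      h₂ g (Ioi 0)
  rw [show (fun x : ℝ => t - x) ⁻¹' Ioi 0 = Iio t by ext x; simp [sub_pos]] at h
  rw [← h]
  exact (setIntegral_congr_set Iio_ae_eq_Iic).symm

lemma aux_reflect_int {g : ℝ → ℝ} {t : ℝ} (hg : IntegrableOn g (Ioi 0)) :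
    IntegrableOn (fun s => g (t - s)) (Iic t) := by
  have h₂ : MeasurableEmbedding (fun x : ℝ => t - x) :=
    (MeasurableEquiv.subLeft t).measurableEmbedding
  have h := ((Measure.measurePreserving_sub_left (volume : Measure ℝ) t).restrict_preimage_emb
      h₂ (Ioi 0)).integrable_comp_emb h₂ (g := g)
  rw [show (fun x : ℝ => t - x) ⁻¹' Ioi 0 = Iio t by ext x; simp [sub_pos]] at h
  have h' : IntegrableOn (fun s => g (t - s)) (Iio t) := h.mpr hg
  rwa [IntegrableOn, ← Measure.restrict_congr_set Iio_ae_eq_Iic]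

lemma k2int {lam α : ℝ} (hlam : 0 < lam) (hα1 : α < 1) :
    IntegrableOn (fun x : ℝ => x ^ (-α) * Real.exp (-lam * x)) (Ioi 0) := by
  have h1α : (0:ℝ) < 1 - α := by linarith
  have hG : IntegrableOn (fun x : ℝ => Real.exp (-x) * x ^ (-α)) (Ioi 0) := by
    have := Real.GammaIntegral_convergent h1α
    simpa [show (1 - α) - 1 = -α by ring] using this
  have h2 : IntegrableOn (fun x : ℝ => Real.exp (-(lam * x)) * (lam * x) ^ (-α)) (Ioi 0) := by
    have := (integrableOn_Ioi_comp_mul_left_iff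
      (fun x : ℝ => Real.exp (-x) * x ^ (-α)) 0 hlam).mpr (by rw [mul_zero]; exact hG)
    exact this
  have h3 : IntegrableOn
      (fun x : ℝ => lam ^ α * (Real.exp (-(lam * x)) * (lam * x) ^ (-α))) (Ioi 0) :=
    h2.const_mul _
  apply h3.congr_fun ?_ measurableSet_Ioi
  intro x hx
  have hx0 : (0:ℝ) < x := hx
  dsimp only
  rw [Real.mul_rpow hlam.le hx0.le]
  calc lam ^ α * (Real.exp (-(lam * x)) * (lam ^ (-α) * x ^ (-α)))
      = (lam ^ α * lam ^ (-α)) * (x ^ (-α) * Real.exp (-(lam * x))) := by ring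
    _ = x ^ (-α) * Real.exp (-lam * x) := by
        rw [← Real.rpow_add hlam, add_neg_cancel, Real.rpow_zero, one_mul, neg_mul]

lemma kval {lam α : ℝ} (hlam : 0 < lam) (hα1 : α < 1) :
    ∫ r in Ioi (0:ℝ), (1 + r ^ (-α)) * Real.exp (-lam * r)
      = 1 / lam + lam ^ (α - 1) * Real.Gamma (1 - α) := by
  have h1α : (0:ℝ) < 1 - α := by linarith
  have hexp : IntegrableOn (fun r : ℝ => Real.exp (-lam * r)) (Ioi 0) :=
    exp_neg_integrableOn_Ioi 0 hlam
  have h4 := k2int hlam hα1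
  have e1 : ∫ r in Ioi (0:ℝ), Real.exp (-lam * r) = 1 / lam := by
    have h := Real.integral_rpow_mul_exp_neg_mul_Ioi zero_lt_one hlam
    rw [Real.rpow_one, Real.Gamma_one, mul_one] at h
    rw [← h]
    refine setIntegral_congr_fun measurableSet_Ioi fun x hx => ?_
    rw [sub_self, Real.rpow_zero, one_mul, neg_mul]
  have e2 : ∫ r in Ioi (0:ℝ), r ^ (-α) * Real.exp (-lam * r)
      = lam ^ (α - 1) * Real.Gamma (1 - α) := by
    have h := Real.integral_rpow_mul_exp_neg_mul_Ioi h1α hlam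
    rw [show (1 - α) - 1 = -α by ring] at h
    simp_rw [← neg_mul] at h
    rw [h, one_div, Real.inv_rpow hlam.le, ← Real.rpow_neg hlam.le,
      show -(1 - α) = α - 1 by ring]
  have : ∀ r : ℝ, (1 + r ^ (-α)) * Real.exp (-lam * r)
      = Real.exp (-lam * r) + r ^ (-α) * Real.exp (-lam * r) := fun r => by ring
  simp_rw [this]
  rw [integral_add hexp h4, e1, e2]

end Aux

theorem stmt_7 {X : Type*} [NormedAddCommGroup X] [NormedSpace ℝ X] [CompleteSpace X]
    (lam α : ℝ) (hlam : 0 < lam) (hα0 : 0 < α) (hα1 : α < 1)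
    (f : ℝ → X) (hcont : Continuous f) (C : ℝ) (hbdd : ∀ t, ‖f t‖ ≤ C)
    (hap : IsAlmostPeriodic f)
    (u : ℝ → X)
    (hu : ∀ t, u t = ∫ s in Set.Iic t,
      ((1 + (t - s) ^ (-α)) * Real.exp (-lam * (t - s))) • f s) :
    IsAlmostPeriodic u ∧
      ∀ ε > (0:ℝ), ∀ T : ℝ, (∀ t, ‖f (t + T) - f t‖ < ε) →
        ∀ t, ‖u (t + T) - u t‖ ≤ ε * (1 / lam + lam ^ (α - 1) * Real.Gamma (1 - α)) := by
  have h1α : (0:ℝ) < 1 - α := by linarith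
  set K : ℝ := 1 / lam + lam ^ (α - 1) * Real.Gamma (1 - α) with hK
  set k : ℝ → ℝ := fun r => (1 + r ^ (-α)) * Real.exp (-lam * r) with hkdef
  have hC : 0 ≤ C := le_trans (norm_nonneg _) (hbdd 0)
  have hkint : IntegrableOn k (Ioi 0) := by
    have hexp : IntegrableOn (fun r : ℝ => Real.exp (-lam * r)) (Ioi 0) :=
      exp_neg_integrableOn_Ioi 0 hlam
    have hsum : IntegrableOn
        (fun r : ℝ => Real.exp (-lam * r) + r ^ (-α) * Real.exp (-lam * r)) (Ioi 0) :=
      hexp.add (k2int hlam hα1)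
    apply hsum.congr_fun ?_ measurableSet_Ioi
    intro x _; simp only [hkdef]; ring
  have hkval : ∫ r in Ioi (0:ℝ), k r = K := kval hlam hα1
  have hknn : ∀ r : ℝ, 0 ≤ r → 0 ≤ k r := by
    intro r hr
    exact mul_nonneg (add_nonneg zero_le_one (Real.rpow_nonneg hr _)) (Real.exp_nonneg _)
  have hmeask : Measurable k := by
    apply Measurable.mul
    · exact measurable_const.add (measurable_id.pow_const _)
    · exact (measurable_id.const_mul _).exp
  have hint : ∀ (t : ℝ) (g : ℝ → X), Continuous g → (∀ s, ‖g s‖ ≤ C) →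
      IntegrableOn (fun s => k (t - s) • g s) (Iic t) := by
    intro t g hg hgb
    have hdom : IntegrableOn (fun s => k (t - s) * C) (Iic t) :=
      (aux_reflect_int hkint).mul_const C
    apply Integrable.mono' hdom
    · exact ((hmeask.comp (measurable_const.sub measurable_id)).aestronglyMeasurable).smul
        hg.aestronglyMeasurable
    · filter_upwards [ae_restrict_mem measurableSet_Iic] with s hs
      rw [norm_smul, Real.norm_eq_abs, abs_of_nonneg (hknn _ (by simpa [sub_nonneg] using hs))]
      exact mul_le_mul_of_nonneg_left (hgb s) (hknn _ (by simpa [sub_nonneg] using hs))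
  have hdiff : ∀ (T t : ℝ), u (t + T) - u t = ∫ s in Iic t, k (t - s) • (f (s + T) - f s) := by
    intro T t
    have h1 : u (t + T) = ∫ s in Iic t, k (t - s) • f (s + T) := by
      rw [hu (t + T)]
      rw [show (∫ s in Iic (t + T),
          ((1 + (t + T - s) ^ (-α)) * Real.exp (-lam * (t + T - s))) • f s)
          = ∫ s in Iic (t + T), k (t + T - s) • f s from rfl]
      rw [aux_shift (fun s => k (t + T - s) • f s) t T]
      simp only [add_sub_add_right_eq_sub]
    have h2 : u t = ∫ s in Iic t, k (t - s) • f s := hu t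
    rw [h1, h2, ← integral_sub
      (hint t (fun s => f (s + T)) (hcont.comp (continuous_id.add continuous_const))
        (fun s => hbdd (s + T)))
      (hint t f hcont hbdd)]
    congr 1; ext s; rw [smul_sub]
  have hbound : ∀ ε > (0:ℝ), ∀ T : ℝ, (∀ t, ‖f (t + T) - f t‖ < ε) →
      ∀ t, ‖u (t + T) - u t‖ ≤ ε * K := by
    intro ε hε T hT t
    rw [hdiff T t]
    have hdom : IntegrableOn (fun s => k (t - s) * ε) (Iic t) :=
      (aux_reflect_int hkint).mul_const ε
    have hb : ‖∫ s in Iic t, k (t - s) • (f (s + T) - f s)‖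
        ≤ ∫ s in Iic t, k (t - s) * ε := by
      apply norm_integral_le_of_norm_le hdom
      filter_upwards [ae_restrict_mem measurableSet_Iic] with s hs
      rw [norm_smul, Real.norm_eq_abs, abs_of_nonneg (hknn _ (by simpa [sub_nonneg] using hs))]
      exact mul_le_mul_of_nonneg_left (hT s).le (hknn _ (by simpa [sub_nonneg] using hs))
    refine hb.trans ?_
    rw [integral_mul_const, aux_reflect k t, hkval, mul_comm]
  have hKpos : 0 < K := by
    have hg : 0 < Real.Gamma (1 - α) := Real.Gamma_pos_of_pos h1α
    have h1 : 0 < 1 / lam := by positivity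
    have h2 : 0 < lam ^ (α - 1) := Real.rpow_pos_of_pos hlam _
    rw [hK]; positivity
  constructor
  · intro ε hε
    obtain ⟨l, hl, hT⟩ := hap (ε / (2 * K)) (by positivity)
    refine ⟨l, hl, fun a => ?_⟩
    obtain ⟨T, hTmem, hTf⟩ := hT a
    refine ⟨T, hTmem, fun t => lt_of_le_of_lt (hbound _ (by positivity) T hTf t) ?_⟩
    have : ε / (2 * K) * K = ε / 2 := by field_simp
    rw [this]; linarith
  · exact hbound
end

section
/- Let X, Y be Banach spaces and let k : (0,∞) → ℝ≥0 be integrable. Suppose f = h + φ where h : ℝ → X is Bohr almost periodic and φ : ℝ₊ → X is continuous with φ(t) → 0 as t → ∞, and all functions are bounded. Then the function u(t) = ∫₀^t k(t-s) f(s) ds decomposes as u = u₁ + u₂ where u₁(t) = ∫_{-∞}^t k(t-s) h(s) ds is Bohr almost periodic and u₂(t) = -∫_t^∞ k(z) h(t-z) dz + ∫₀^t k(t-s) φ(s) ds satisfies u₂(t) → 0 as t → +∞. Consequently u is asymptotically almost periodic on ℝ₊. -/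
open MeasureTheory Real Set Filter

section Aux

variable {X : Type*} [NormedAddCommGroup X] [NormedSpace ℝ X] [CompleteSpace X]

lemma aux_cov_set (t : ℝ) (F : ℝ → X) (S : Set ℝ) :
    ∫ x in (fun x : ℝ => t - x) ⁻¹' S, F (t - x) = ∫ z in S, F z :=
  (Measure.measurePreserving_sub_left volume t).setIntegral_preimage_emb
    (MeasurableEquiv.subLeft t).measurableEmbedding F S

lemma aux_cov_integrableOn (t : ℝ) (F : ℝ → X) (S : Set ℝ) (hF : IntegrableOn F S) :
    IntegrableOn (fun x => F (t - x)) ((fun x : ℝ => t - x) ⁻¹' S) :=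
  (((Measure.measurePreserving_sub_left volume t).restrict_preimage_emb
      (MeasurableEquiv.subLeft t).measurableEmbedding S).integrable_comp_emb
      (MeasurableEquiv.subLeft t).measurableEmbedding (g := F)).mpr hF

end Aux

theorem stmt_16 {X : Type*} [NormedAddCommGroup X] [NormedSpace ℝ X] [CompleteSpace X]
    (k : ℝ → ℝ) (hkmeas : Measurable k) (hknonneg : ∀ r > (0:ℝ), 0 ≤ k r)
    (hkint : IntegrableOn k (Ioi 0))
    (h : ℝ → X) (hhc : Continuous h) (hap : IsAlmostPeriodic h)
    (Ch : ℝ) (hhb : ∀ t, ‖h t‖ ≤ Ch)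
    (φ : ℝ → X) (hφc : Continuous φ) (Cφ : ℝ) (hφb : ∀ t, ‖φ t‖ ≤ Cφ)
    (hφl : Tendsto φ atTop (nhds 0)) :
    IsAlmostPeriodic (fun t : ℝ => ∫ s in Set.Iic t, k (t - s) • h s) ∧
    Tendsto (fun t : ℝ =>
        (-∫ z in Set.Ioi t, k z • h (t - z)) + ∫ s in (0:ℝ)..t, k (t - s) • φ s)
      atTop (nhds 0) ∧
    ∀ t ≥ (0:ℝ),
      (∫ s in (0:ℝ)..t, k (t - s) • (h s + φ s))
        = (∫ s in Set.Iic t, k (t - s) • h s)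
          + ((-∫ z in Set.Ioi t, k z • h (t - z)) + ∫ s in (0:ℝ)..t, k (t - s) • φ s) := by
  have hCh : 0 ≤ Ch := le_trans (norm_nonneg _) (hhb 0)
  have hCφ : 0 ≤ Cφ := le_trans (norm_nonneg _) (hφb 0)
  -- the tail mass function
  set In : ℝ := ∫ z in Ioi (0:ℝ), ‖k z‖ with hIn
  have hIn0 : 0 ≤ In := setIntegral_nonneg measurableSet_Ioi (fun z _ => norm_nonneg _)
  -- integrability of z ↦ k z • G (t - z) on any S with k integrable on S
  have intker : ∀ (G : ℝ → X), Continuous G → ∀ (C : ℝ), (∀ s, ‖G s‖ ≤ C) →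
      ∀ (t : ℝ) (S : Set ℝ), IntegrableOn k S →
      IntegrableOn (fun z => k z • G (t - z)) S := by
    intro G hGc C hGb t S hkS
    refine Integrable.mono' (hkS.norm.mul_const C) ?_ ?_
    · exact ((hkmeas.aestronglyMeasurable).smul
        ((hGc.comp (continuous_const.sub continuous_id)).aestronglyMeasurable)).restrict
    · filter_upwards with z
      rw [norm_smul]
      exact mul_le_mul_of_nonneg_left (hGb _) (norm_nonneg _)
  -- integrability of s ↦ k (t - s) on Iic t
  have hks : ∀ t : ℝ, IntegrableOn (fun s => k (t - s)) (Iic t) := by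
    intro t
    have h1 : IntegrableOn (fun s => k (t - s)) ((fun x : ℝ => t - x) ⁻¹' (Ioi 0)) :=
      aux_cov_integrableOn t k (Ioi 0) hkint
    have h2 : (fun x : ℝ => t - x) ⁻¹' (Ioi 0) = Iio t := by
      ext x; simp [sub_pos]
    rw [h2] at h1
    rwa [IntegrableOn, Measure.restrict_congr_set Iio_ae_eq_Iic] at h1
  -- integrability of s ↦ k (t - s) • G s on Iic t, for bounded continuous G
  have intker' : ∀ (G : ℝ → X), Continuous G → ∀ (C : ℝ), (∀ s, ‖G s‖ ≤ C) →
      ∀ t : ℝ, IntegrableOn (fun s => k (t - s) • G s) (Iic t) := by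
    intro G hGc C hGb t
    refine Integrable.mono' (((hks t).norm).mul_const C) ?_ ?_
    · exact (((hkmeas.comp (measurable_const.sub measurable_id)).aestronglyMeasurable).smul
        hGc.aestronglyMeasurable).restrict
    · filter_upwards with s
      rw [norm_smul]
      exact mul_le_mul_of_nonneg_left (hGb _) (norm_nonneg _)
  -- the almost periodic candidate
  set g : ℝ → X := fun t => ∫ z in Ioi (0:ℝ), k z • h (t - z) with hg
  have hgint : ∀ t : ℝ, IntegrableOn (fun z => k z • h (t - z)) (Ioi 0) :=
    fun t => intker h hhc Ch hhb t (Ioi 0) hkint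
  -- identification of u₁ with g
  have hu1 : ∀ t : ℝ, (∫ s in Set.Iic t, k (t - s) • h s) = g t := by
    intro t
    have h2 : (fun x : ℝ => t - x) ⁻¹' (Ioi 0) = Iio t := by
      ext x; simp [sub_pos]
    have : (∫ s in Iio t, k (t - s) • h s)
        = ∫ x in (fun x : ℝ => t - x) ⁻¹' (Ioi 0), (fun z => k z • h (t - z)) (t - x) := by
      rw [h2]
      refine setIntegral_congr_fun measurableSet_Iio (fun x _ => ?_)
      simp
    rw [← Measure.restrict_congr_set (Iio_ae_eq_Iic (a := t)), this,
      aux_cov_set t (fun z => k z • h (t - z)) (Ioi 0)]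

  -- Part 1: g is almost periodic
  have hgap : IsAlmostPeriodic g := by
    intro ε hε
    have hIn1 : (0:ℝ) < In + 1 := by linarith
    have hε' : 0 < ε / (In + 1) := div_pos hε hIn1
    obtain ⟨l, hl, H⟩ := hap (ε / (In + 1)) hε'
    refine ⟨l, hl, fun a => ?_⟩
    obtain ⟨T, hT, hT2⟩ := H a
    refine ⟨T, hT, fun t => ?_⟩
    have hsub : g (t + T) - g t = ∫ z in Ioi (0:ℝ), k z • (h (t - z + T) - h (t - z)) := by
      rw [hg]
      rw [← integral_sub (hgint (t + T)) (hgint t)]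
      refine setIntegral_congr_fun measurableSet_Ioi (fun z _ => ?_)
      have : t + T - z = t - z + T := by ring
      rw [← smul_sub, this]
    have hb : ‖g (t + T) - g t‖ ≤ In * (ε / (In + 1)) := by
      rw [hsub]
      calc ‖∫ z in Ioi (0:ℝ), k z • (h (t - z + T) - h (t - z))‖
          ≤ ∫ z in Ioi (0:ℝ), ‖k z‖ * (ε / (In + 1)) := by
            refine norm_integral_le_of_norm_le (hkint.norm.mul_const _) ?_
            filter_upwards with z
            rw [norm_smul]
            exact mul_le_mul_of_nonneg_left (le_of_lt (hT2 _)) (norm_nonneg _)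
        _ = In * (ε / (In + 1)) := integral_mul_const _ _
    have e1 : (In + 1) * (ε / (In + 1)) = ε := by field_simp
    have e2 : In * (ε / (In + 1)) < (In + 1) * (ε / (In + 1)) :=
      mul_lt_mul_of_pos_right (by linarith) hε'
    calc ‖g (t + T) - g t‖ ≤ In * (ε / (In + 1)) := hb
      _ < ε := by linarith
  -- the tail mass function
  set M : ℝ → ℝ := fun t => ∫ z in Ioi t, ‖k z‖ with hMdef
  have hM0 : Tendsto M atTop (nhds 0) := by
    have h1 : Tendsto (fun t : ℝ => ∫ z in (0:ℝ)..t, ‖k z‖) atTop (nhds In) :=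
      intervalIntegral_tendsto_integral_Ioi 0 hkint.norm tendsto_id
    have h2 : ∀ᶠ t : ℝ in atTop, In - ∫ z in (0:ℝ)..t, ‖k z‖ = M t := by
      filter_upwards [eventually_ge_atTop (0:ℝ)] with t ht
      have hsplit : In = (∫ z in Ioc (0:ℝ) t, ‖k z‖) + ∫ z in Ioi t, ‖k z‖ := by
        rw [hIn, ← setIntegral_union (Ioc_disjoint_Ioi le_rfl) measurableSet_Ioi
          (IntegrableOn.mono_set hkint.norm Ioc_subset_Ioi_self) (IntegrableOn.mono_set hkint.norm (Ioi_subset_Ioi ht)),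
          Ioc_union_Ioi_eq_Ioi ht]
      rw [intervalIntegral.integral_of_le ht]
      rw [hMdef]
      dsimp only
      linarith [hsplit]
    have h3 : Tendsto (fun t : ℝ => In - ∫ z in (0:ℝ)..t, ‖k z‖) atTop (nhds 0) := by
      have := tendsto_const_nhds (x := In) (f := atTop (α := ℝ)) |>.sub h1
      simpa using this
    exact h3.congr' h2
  -- Part 2a : the h-tail tends to zero
  have hA : Tendsto (fun t : ℝ => ∫ z in Ioi t, k z • h (t - z)) atTop (nhds 0) := by
    rw [tendsto_zero_iff_norm_tendsto_zero]
    have hlim : Tendsto (fun t : ℝ => Ch * M t) atTop (nhds 0) := by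
      simpa using hM0.const_mul Ch
    refine squeeze_zero' (Eventually.of_forall fun t => norm_nonneg _) ?_ hlim
    filter_upwards [eventually_ge_atTop (0:ℝ)] with t ht
    calc ‖∫ z in Ioi t, k z • h (t - z)‖
        ≤ ∫ z in Ioi t, ‖k z‖ * Ch := by
          refine norm_integral_le_of_norm_le ((IntegrableOn.mono_set hkint.norm (Ioi_subset_Ioi ht)).mul_const Ch) ?_
          filter_upwards with z
          rw [norm_smul]
          exact mul_le_mul_of_nonneg_left (hhb _) (norm_nonneg _)
      _ = Ch * M t := by rw [integral_mul_const]; ring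
  -- almost sure nonvanishing (for a.e. set inclusions)
  have hne : ∀ c : ℝ, ∀ᵐ x : ℝ, x ≠ c := by
    intro c
    rw [ae_iff]
    simpa using measure_singleton (c : ℝ)
  -- Part 2b : the φ-convolution tends to zero
  have hB : Tendsto (fun t : ℝ => ∫ s in (0:ℝ)..t, k (t - s) • φ s) atTop (nhds 0) := by
    rw [NormedAddCommGroup.tendsto_nhds_zero]
    intro ε hε
    have hIn1 : (0:ℝ) < In + 1 := by linarith
    set ε₁ : ℝ := ε / (2 * (In + 1)) with hε₁def
    have hε₁ : 0 < ε₁ := div_pos hε (by linarith)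
    obtain ⟨T₀, hT₀⟩ : ∃ T₀ : ℝ, ∀ s ≥ T₀, ‖φ s‖ < ε₁ := by
      have := Metric.tendsto_nhds.mp hφl ε₁ hε₁
      simp only [dist_zero_right] at this
      exact eventually_atTop.mp this
    set T : ℝ := max T₀ 0 with hTdef
    have hTφ : ∀ s ≥ T, ‖φ s‖ < ε₁ := fun s hs => hT₀ s (le_trans (le_max_left _ _) hs)
    have hT0 : (0:ℝ) ≤ T := le_max_right _ _
    have hMT : Tendsto (fun t : ℝ => Cφ * M (t - T)) atTop (nhds 0) := by
      have hshift : Tendsto (fun t : ℝ => t - T) atTop atTop := by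
        simpa [sub_eq_add_neg] using tendsto_atTop_add_const_right atTop (-T) tendsto_id
      simpa using (hM0.comp hshift).const_mul Cφ
    have hsecond : ∀ᶠ t : ℝ in atTop, Cφ * M (t - T) < ε / 2 :=
      hMT.eventually_lt_const (half_pos hε)
    filter_upwards [eventually_ge_atTop T, hsecond] with t htT hsmall
    have ht0 : (0:ℝ) ≤ t := le_trans hT0 htT
    have hiφ : IntegrableOn (fun s => k (t - s) • φ s) (Iic t) := intker' φ hφc Cφ hφb t
    have hsub1 : Ioc (0:ℝ) T ⊆ Iic t := fun x hx => le_trans hx.2 htT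
    have hsub2 : Ioc T t ⊆ Iic t := fun x hx => hx.2
    have i1 : IntervalIntegrable (fun s => k (t - s) • φ s) volume 0 T := by
      rw [intervalIntegrable_iff, uIoc_of_le hT0]
      exact hiφ.mono_set hsub1
    have i2 : IntervalIntegrable (fun s => k (t - s) • φ s) volume T t := by
      rw [intervalIntegrable_iff, uIoc_of_le htT]
      exact hiφ.mono_set hsub2
    have hsplitB : (∫ s in (0:ℝ)..t, k (t - s) • φ s)
        = (∫ s in (0:ℝ)..T, k (t - s) • φ s) + ∫ s in T..t, k (t - s) • φ s :=
      (intervalIntegral.integral_add_adjacent_intervals i1 i2).symm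
    -- first piece
    have hb1 : ‖∫ s in (0:ℝ)..T, k (t - s) • φ s‖ ≤ Cφ * M (t - T) := by
      rw [intervalIntegral.integral_of_le hT0]
      have hcov1 : (∫ s in Ioc (0:ℝ) T, ‖k (t - s)‖) = ∫ z in Ico (t - T) t, ‖k z‖ := by
        have hpre : (fun x : ℝ => t - x) ⁻¹' (Ico (t - T) t) = Ioc 0 T := by
          ext x
          simp only [mem_preimage, mem_Ico, mem_Ioc]
          constructor
          · rintro ⟨h1, h2⟩; constructor <;> linarith
          · rintro ⟨h1, h2⟩; constructor <;> linarith
        rw [← hpre, aux_cov_set t (fun z => ‖k z‖) (Ico (t - T) t)]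
      calc ‖∫ s in Ioc (0:ℝ) T, k (t - s) • φ s‖
          ≤ ∫ s in Ioc (0:ℝ) T, ‖k (t - s)‖ * Cφ := by
            refine norm_integral_le_of_norm_le ((IntegrableOn.mono_set (hks t).norm hsub1).mul_const Cφ) ?_
            filter_upwards with s
            rw [norm_smul]
            exact mul_le_mul_of_nonneg_left (hφb _) (norm_nonneg _)
        _ = (∫ s in Ioc (0:ℝ) T, ‖k (t - s)‖) * Cφ := integral_mul_const _ _
        _ ≤ M (t - T) * Cφ := by
            refine mul_le_mul_of_nonneg_right ?_ hCφ
            rw [hcov1]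
            refine setIntegral_mono_set
              (IntegrableOn.mono_set hkint.norm (Ioi_subset_Ioi (by linarith)))
              (Eventually.of_forall fun z => norm_nonneg _) ?_
            filter_upwards [hne (t - T)] with x hx
            intro hmem
            exact lt_of_le_of_ne hmem.1 (Ne.symm hx)
        _ = Cφ * M (t - T) := mul_comm _ _
    -- second piece
    have hb2 : ‖∫ s in T..t, k (t - s) • φ s‖ ≤ In * ε₁ := by
      rw [intervalIntegral.integral_of_le htT]
      have hcov2 : (∫ s in Ioc T t, ‖k (t - s)‖) = ∫ z in Ico (0:ℝ) (t - T), ‖k z‖ := by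
        have hpre : (fun x : ℝ => t - x) ⁻¹' (Ico 0 (t - T)) = Ioc T t := by
          ext x
          simp only [mem_preimage, mem_Ico, mem_Ioc]
          constructor
          · rintro ⟨h1, h2⟩; constructor <;> linarith
          · rintro ⟨h1, h2⟩; constructor <;> linarith
        rw [← hpre, aux_cov_set t (fun z => ‖k z‖) (Ico 0 (t - T))]
      calc ‖∫ s in Ioc T t, k (t - s) • φ s‖
          ≤ ∫ s in Ioc T t, ‖k (t - s)‖ * ε₁ := by
            refine norm_integral_le_of_norm_le ((IntegrableOn.mono_set (hks t).norm hsub2).mul_const ε₁) ?_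
            rw [ae_restrict_iff' measurableSet_Ioc]
            filter_upwards with s hs
            rw [norm_smul]
            exact mul_le_mul_of_nonneg_left (le_of_lt (hTφ s (le_of_lt hs.1))) (norm_nonneg _)
        _ = (∫ s in Ioc T t, ‖k (t - s)‖) * ε₁ := integral_mul_const _ _
        _ ≤ In * ε₁ := by
            refine mul_le_mul_of_nonneg_right ?_ hε₁.le
            rw [hcov2, hIn]
            refine setIntegral_mono_set hkint.norm
              (Eventually.of_forall fun z => norm_nonneg _) ?_
            filter_upwards [hne 0] with x hx
            intro hmem
            exact lt_of_le_of_ne hmem.1 (Ne.symm hx)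
    have e1 : (In + 1) * ε₁ = ε / 2 := by rw [hε₁def]; field_simp
    have e2 : In * ε₁ < (In + 1) * ε₁ := mul_lt_mul_of_pos_right (by linarith) hε₁
    calc ‖∫ s in (0:ℝ)..t, k (t - s) • φ s‖
        = ‖(∫ s in (0:ℝ)..T, k (t - s) • φ s) + ∫ s in T..t, k (t - s) • φ s‖ := by rw [hsplitB]
      _ ≤ ‖∫ s in (0:ℝ)..T, k (t - s) • φ s‖ + ‖∫ s in T..t, k (t - s) • φ s‖ := norm_add_le _ _
      _ < ε := by linarith
  refine ⟨?_, ?_, ?_⟩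
  · have : (fun t : ℝ => ∫ s in Set.Iic t, k (t - s) • h s) = g := funext hu1
    rw [this]; exact hgap
  · have := (hA.neg).add hB
    simpa using this
  · intro t ht
    have hih : IntervalIntegrable (fun s => k (t - s) • h s) volume 0 t := by
      rw [intervalIntegrable_iff, uIoc_of_le ht]
      exact (intker' h hhc Ch hhb t).mono_set Ioc_subset_Iic_self
    have hiφ : IntervalIntegrable (fun s => k (t - s) • φ s) volume 0 t := by
      rw [intervalIntegrable_iff, uIoc_of_le ht]
      exact (intker' φ hφc Cφ hφb t).mono_set Ioc_subset_Iic_self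
    have hadd : (∫ s in (0:ℝ)..t, k (t - s) • (h s + φ s))
        = (∫ s in (0:ℝ)..t, k (t - s) • h s) + ∫ s in (0:ℝ)..t, k (t - s) • φ s := by
      simp_rw [smul_add]
      exact intervalIntegral.integral_add hih hiφ
    have hcov : (∫ s in (0:ℝ)..t, k (t - s) • h s) = ∫ z in (0:ℝ)..t, k z • h (t - z) := by
      have := intervalIntegral.integral_comp_sub_left (a := 0) (b := t)
        (fun z => k z • h (t - z)) t
      simpa using this
    have hsplit : (∫ z in (0:ℝ)..t, k z • h (t - z))
        = g t - ∫ z in Ioi t, k z • h (t - z) := by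
      rw [intervalIntegral.integral_of_le ht]
      have hu := setIntegral_union (Ioc_disjoint_Ioi le_rfl) measurableSet_Ioi
        ((hgint t).mono_set Ioc_subset_Ioi_self) ((hgint t).mono_set (Ioi_subset_Ioi ht))
      rw [Ioc_union_Ioi_eq_Ioi ht] at hu
      rw [hg]
      dsimp only
      rw [hu]
      abel
    rw [hadd, hcov, hsplit, hu1 t]
    abel
end
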